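/- (Lemma 3.2, 'dp'.) Fix natural numbers k ≥ 1 and p₀, q₀ with p₀ ≥ q₀ + 1 and q₀ ≥ k + 1. Suppose c : Multiset ℕ → Bool satisfies the blue covering condition for (p₀, k, p₀ − 1) and the red covering condition for (q₀, k, p₀ − 1). Then for every p ≥ p₀ and every q ≥ q₀, c satisfies the blue covering condition for (p, k, p − 1) and the red covering condition for (q, k, p − 1). -/
import Mathlib


/-- A primal cardinality vector: a multiset of positive naturals. -/
def IsPCV (m : Multiset ℕ) : Prop := ∀ x ∈ m, 0 < x

/-- `Contains m' m` (the paper's `m' ≤_c m`): the elements of `m'` can be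
matched bijectively with elements of a submultiset of `m` so that each element
of `m'` is at most its partner. -/
def Contains (m' m : Multiset ℕ) : Prop :=
  ∃ t : Multiset ℕ, t ≤ m ∧ Multiset.Rel (· ≤ ·) m' t

/-- The blue covering condition for `(s, k, d)`: every pcv of sum `s` and
length at most `d` contains a blue (`false`) pcv of sum `k` and length at most `d`. -/
def BlueCovering (c : Multiset ℕ → Bool) (s k d : ℕ) : Prop :=
  ∀ m : Multiset ℕ, IsPCV m → m.card ≤ d → m.sum = s →
    ∃ m' : Multiset ℕ, IsPCV m' ∧ m'.card ≤ d ∧ m'.sum = k ∧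
      Contains m' m ∧ c m' = false

/-- The red covering condition for `(s, k, d)`. -/
def RedCovering (c : Multiset ℕ → Bool) (s k d : ℕ) : Prop :=
  ∀ m : Multiset ℕ, IsPCV m → m.card ≤ d → m.sum = s →
    ∃ m' : Multiset ℕ, IsPCV m' ∧ m'.card ≤ d ∧ m'.sum = k ∧
      Contains m' m ∧ c m' = true

lemma contains_of_le {m' m : Multiset ℕ} (h : m' ≤ m) : Contains m' m :=
  ⟨m', h, Multiset.rel_refl_of_refl_on fun _ _ => le_rfl⟩

lemma rel_sub {m' m t : Multiset ℕ} (hrel : Multiset.Rel (· ≤ ·) m t) (hle : m' ≤ m) :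
    ∃ t' : Multiset ℕ, t' ≤ t ∧ Multiset.Rel (· ≤ ·) m' t' := by
  obtain ⟨u, rfl⟩ := Multiset.le_iff_exists_add.mp hle
  rw [Multiset.rel_add_left] at hrel
  obtain ⟨t₀, t₁, h₀, _, rfl⟩ := hrel
  exact ⟨t₀, Multiset.le_add_right _ _, h₀⟩

lemma contains_trans {a b c : Multiset ℕ} (h₁ : Contains a b) (h₂ : Contains b c) :
    Contains a c := by
  obtain ⟨t₁, ht₁, hr₁⟩ := h₁
  obtain ⟨t₂, ht₂, hr₂⟩ := h₂
  obtain ⟨s, hs, hrs⟩ := rel_sub hr₂ ht₁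
  exact ⟨s, le_trans hs ht₂, Multiset.Rel.trans _ hr₁ hrs⟩

lemma card_le_sum {m : Multiset ℕ} (hm : IsPCV m) : m.card ≤ m.sum := by
  simpa using Multiset.card_nsmul_le_sum (fun x hx => hm x hx)

/-- Decrement lemma preserving card < sum. -/
lemma decrement_strict {m : Multiset ℕ} (hm : IsPCV m) (hcs : m.card < m.sum)
    (h3 : 3 ≤ m.sum) :
    ∃ m₁ : Multiset ℕ, IsPCV m₁ ∧ Contains m₁ m ∧ m₁.sum + 1 = m.sum ∧ m₁.card < m₁.sum := by
  rcases lt_or_eq_of_le (Nat.succ_le_of_lt hcs) with hlt | heq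
  · -- card + 1 < sum : decrement an element ≥ 2
    have ha : ∃ a ∈ m, 2 ≤ a := by
      by_contra h
      push_neg at h
      have : m.sum ≤ m.card := by
        simpa using Multiset.sum_le_card_nsmul m 1 (fun x hx => Nat.lt_succ_iff.mp (h x hx))
      omega
    obtain ⟨a, ham, ha2⟩ := ha
    refine ⟨(a - 1) ::ₘ m.erase a, ?_, ?_, ?_, ?_⟩
    · intro x hx
      rcases Multiset.mem_cons.mp hx with rfl | hx
      · omega
      · exact hm x (Multiset.mem_of_mem_erase hx)
    · refine ⟨m, le_rfl, ?_⟩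
      conv_rhs => rw [← Multiset.cons_erase ham]
      exact Multiset.Rel.cons (by omega) (Multiset.rel_refl_of_refl_on fun _ _ => le_rfl)
    · have hsum : m.sum = a + (m.erase a).sum := by
        conv_lhs => rw [← Multiset.cons_erase ham]
        simp
      simp only [Multiset.sum_cons]
      omega
    · have hc : (m.erase a).card + 1 = m.card := by
        rw [Multiset.card_erase_of_mem ham]
        simp only [Nat.pred_eq_sub_one]
        have : 0 < m.card := Multiset.card_pos.mpr (by rintro rfl; simp at ham)
        omega
      have hsum : m.sum = a + (m.erase a).sum := by
        conv_lhs => rw [← Multiset.cons_erase ham]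
        simp
      simp only [Multiset.card_cons, Multiset.sum_cons]
      omega
  · -- card + 1 = sum : there is a 1 in m; erase it
    have h1 : (1 : ℕ) ∈ m := by
      by_contra h1
      have : ∀ x ∈ m, 2 ≤ x := by
        intro x hx
        have hx0 := hm x hx
        rcases Nat.lt_or_ge x 2 with h | h
        · exfalso; have : x = 1 := by omega
          exact h1 (this ▸ hx)
        · exact h
      have : 2 * m.card ≤ m.sum := by
        simpa [mul_comm] using Multiset.card_nsmul_le_sum this
      omega
    refine ⟨m.erase 1, fun x hx => hm x (Multiset.mem_of_mem_erase hx),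
      contains_of_le (Multiset.erase_le _ _), ?_, ?_⟩
    · have : m.sum = 1 + (m.erase 1).sum := by
        conv_lhs => rw [← Multiset.cons_erase h1]; simp
      omega
    · have hc : (m.erase 1).card + 1 = m.card := by
        rw [Multiset.card_erase_of_mem h1]
        simp only [Nat.pred_eq_sub_one]
        have : 0 < m.card := Multiset.card_pos.mpr (by rintro rfl; simp at h1)
        omega
      have : m.sum = 1 + (m.erase 1).sum := by
        conv_lhs => rw [← Multiset.cons_erase h1]; simp
      omega

/-- Blue reduction: reduce sum by n keeping card < sum. -/
lemma reduce_strict (s₀ : ℕ) (hs₀ : 3 ≤ s₀) :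
    ∀ n : ℕ, ∀ m : Multiset ℕ, IsPCV m → m.card < m.sum → m.sum = s₀ + n →
    ∃ mt : Multiset ℕ, IsPCV mt ∧ Contains mt m ∧ mt.sum = s₀ ∧ mt.card < s₀ := by
  intro n
  induction n with
  | zero => intro m hm hcs hsum
            exact ⟨m, hm, contains_of_le le_rfl, by omega, by omega⟩
  | succ n ih =>
      intro m hm hcs hsum
      obtain ⟨m₁, hm₁, hc₁, hs₁, hcs₁⟩ := decrement_strict hm hcs (by omega)
      obtain ⟨mt, h1, h2, h3, h4⟩ := ih m₁ hm₁ hcs₁ (by omega)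
      exact ⟨mt, h1, contains_trans h2 hc₁, h3, h4⟩

/-- Red decrement: reduce sum by 1, any pcv with positive sum. -/
lemma decrement_weak {m : Multiset ℕ} (hm : IsPCV m) (hs : 1 ≤ m.sum) :
    ∃ m₁ : Multiset ℕ, IsPCV m₁ ∧ Contains m₁ m ∧ m₁.sum + 1 = m.sum := by
  have hne : m ≠ 0 := by rintro rfl; simp at hs
  obtain ⟨a, ham⟩ := Multiset.exists_mem_of_ne_zero hne
  have ha1 := hm a ham
  have hsum : m.sum = a + (m.erase a).sum := by
    conv_lhs => rw [← Multiset.cons_erase ham]; simp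
  rcases Nat.lt_or_ge a 2 with h | h
  · have : a = 1 := by omega
    subst this
    exact ⟨m.erase 1, fun x hx => hm x (Multiset.mem_of_mem_erase hx),
      contains_of_le (Multiset.erase_le _ _), by omega⟩
  · refine ⟨(a - 1) ::ₘ m.erase a, ?_, ?_, ?_⟩
    · intro x hx
      rcases Multiset.mem_cons.mp hx with rfl | hx
      · omega
      · exact hm x (Multiset.mem_of_mem_erase hx)
    · refine ⟨m, le_rfl, ?_⟩
      conv_rhs => rw [← Multiset.cons_erase ham]
      exact Multiset.Rel.cons (by omega) (Multiset.rel_refl_of_refl_on fun _ _ => le_rfl)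
    · simp only [Multiset.sum_cons]; omega

lemma reduce_weak (s₀ : ℕ) :
    ∀ n : ℕ, ∀ m : Multiset ℕ, IsPCV m → m.sum = s₀ + n →
    ∃ mt : Multiset ℕ, IsPCV mt ∧ Contains mt m ∧ mt.sum = s₀ := by
  intro n
  induction n with
  | zero => intro m hm hsum; exact ⟨m, hm, contains_of_le le_rfl, by omega⟩
  | succ n ih =>
      intro m hm hsum
      obtain ⟨m₁, hm₁, hc₁, hs₁⟩ := decrement_weak hm (by omega)
      obtain ⟨mt, h1, h2, h3⟩ := ih m₁ hm₁ (by omega)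
      exact ⟨mt, h1, contains_trans h2 hc₁, h3⟩

theorem stmt_9 (k p₀ q₀ : ℕ) (hk : 1 ≤ k) (hpq : q₀ + 1 ≤ p₀) (hqk : k + 1 ≤ q₀)
    (c : Multiset ℕ → Bool)
    (hblue : BlueCovering c p₀ k (p₀ - 1)) (hred : RedCovering c q₀ k (p₀ - 1)) :
    ∀ p q : ℕ, p₀ ≤ p → q₀ ≤ q →
      BlueCovering c p k (p - 1) ∧ RedCovering c q k (p - 1) := by
  intro p q hp hq
  have hp₀3 : 3 ≤ p₀ := by omega
  constructor
  · intro m hm hcard hsum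
    obtain ⟨mt, hpcv, hcont, hsumt, hcardt⟩ :=
      reduce_strict p₀ hp₀3 (p - p₀) m hm (by omega) (by omega)
    obtain ⟨m', h1, h2, h3, h4, h5⟩ := hblue mt hpcv (by omega) hsumt
    exact ⟨m', h1, by omega, h3, contains_trans h4 hcont, h5⟩
  · intro m hm hcard hsum
    obtain ⟨mt, hpcv, hcont, hsumt⟩ := reduce_weak q₀ (q - q₀) m hm (by omega)
    have hct : mt.card ≤ q₀ := hsumt ▸ card_le_sum hpcv
    obtain ⟨m', h1, h2, h3, h4, h5⟩ := hred mt hpcv (by omega) hsumt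
    exact ⟨m', h1, by omega, h3, contains_trans h4 hcont, h5⟩
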